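/- arXiv:1904.06432 — 8 statements merged into one kernel-verified Lean document; each statement's English description precedes it below -/
import Mathlib

section
/- Let U ⊆ ℝ^d be a convex set, and for each k ∈ {0,…,j} let S_k ⊆ X be a set with an associated policy π_k : ℝ^n → ℝ^d such that for all x ∈ S_k we have π_k x ∈ U and, for all w ∈ W, A x + B (π_k x) + w ∈ S_k. Then the convex safe set CS = convexHull ℝ (⋃_{k≤j} S_k) is a robust control invariant set: for every x ∈ CS there exists u ∈ U such that for all w ∈ W, A x + B u + w ∈ CS. -/
/-!
Collect the admissible state–input pairs `(x, π k x)`, `x ∈ S k`, into one set `P ⊆ ℝⁿ × ℝᵈ`.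
Every `x` in the convex hull of the safe sets is the state of some pair `(x, u)` in the convex
hull of `P`, since projection to the state commutes with taking convex hulls. On that hull the
input stays in the convex set `U`, and the successor `A x + B u + w` is the image of `(x, u)` under
an affine map sending `P` into `⋃ k, S k`, hence lies in the convex hull of `⋃ k, S k`.
-/

section RobustControlInvariant

variable {𝕜 E F : Type*} [Semiring 𝕜] [PartialOrder 𝕜] [AddCommMonoid E] [AddCommMonoid F]
  [Module 𝕜 E] [Module 𝕜 F]

def IsRobustControlInvariant (A : E →ₗ[𝕜] E) (B : F →ₗ[𝕜] E) (W : Set E) (U : Set F)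
    (C : Set E) : Prop :=
  ∀ x ∈ C, ∃ u ∈ U, ∀ w ∈ W, A x + B u + w ∈ C

theorem exists_mk_mem_convexHull_of_mem_convexHull_image_fst {P : Set (E × F)} {x : E}
    (hx : x ∈ convexHull 𝕜 (Prod.fst '' P)) : ∃ u, (x, u) ∈ convexHull 𝕜 P := by
  rw [← LinearMap.coe_fst (R := 𝕜) (M₂ := F), ← LinearMap.image_convexHull] at hx
  obtain ⟨⟨x, u⟩, hxu, rfl⟩ := hx
  exact ⟨u, hxu⟩

theorem convexHull_subset_snd_preimage {P : Set (E × F)} {U : Set F} (hU : Convex 𝕜 U)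
    (hPU : ∀ p ∈ P, p.2 ∈ U) : convexHull 𝕜 P ⊆ Prod.snd ⁻¹' U :=
  convexHull_min hPU (hU.linear_preimage (LinearMap.snd 𝕜 E F))

theorem add_add_mem_convexHull {A : E →ₗ[𝕜] E} {B : F →ₗ[𝕜] E} {P : Set (E × F)} {C : Set E}
    {w : E} (hP : ∀ p ∈ P, A p.1 + B p.2 + w ∈ C) {p : E × F} (hp : p ∈ convexHull 𝕜 P) :
    A p.1 + B p.2 + w ∈ convexHull 𝕜 C :=
  convexHull_min (t := A.coprod B ⁻¹' ((· + w) ⁻¹' convexHull 𝕜 C))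
    (fun q hq => subset_convexHull 𝕜 C (hP q hq))
    (((convex_convexHull 𝕜 C).translate_preimage_left w).linear_preimage _) hp

theorem isRobustControlInvariant_convexHull_image_fst {A : E →ₗ[𝕜] E} {B : F →ₗ[𝕜] E}
    {W : Set E} {U : Set F} {P : Set (E × F)} (hU : Convex 𝕜 U) (hPU : ∀ p ∈ P, p.2 ∈ U)
    (hPW : ∀ p ∈ P, ∀ w ∈ W, A p.1 + B p.2 + w ∈ Prod.fst '' P) :
    IsRobustControlInvariant A B W U (convexHull 𝕜 (Prod.fst '' P)) := by
  intro x hx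
  obtain ⟨u, hxu⟩ := exists_mk_mem_convexHull_of_mem_convexHull_image_fst hx
  exact ⟨u, convexHull_subset_snd_preimage hU hPU hxu,
    fun w hw => add_add_mem_convexHull (fun p hp => hPW p hp w hw) hxu⟩

end RobustControlInvariant

theorem convexSafeSet_robust_control_invariant_general
    {n d j : ℕ}
    (A : (Fin n → ℝ) →ₗ[ℝ] (Fin n → ℝ)) (B : (Fin d → ℝ) →ₗ[ℝ] (Fin n → ℝ))
    (W : Set (Fin n → ℝ)) (U : Set (Fin d → ℝ))
    (hU : Convex ℝ U)
    (S : Fin (j + 1) → Set (Fin n → ℝ))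
    (π : Fin (j + 1) → (Fin n → ℝ) → (Fin d → ℝ))
    (hπU : ∀ k, ∀ x ∈ S k, π k x ∈ U)
    (hInv : ∀ k, ∀ x ∈ S k, ∀ w ∈ W, A x + B (π k x) + w ∈ S k) :
    ∀ x ∈ convexHull ℝ (⋃ k, S k), ∃ u ∈ U, ∀ w ∈ W,
      A x + B u + w ∈ convexHull ℝ (⋃ k, S k) := by
  set P : Set ((Fin n → ℝ) × (Fin d → ℝ)) := ⋃ k, (fun x => (x, π k x)) '' S k
  have hP : Prod.fst '' P = ⋃ k, S k := by
    simp only [P, Set.image_iUnion, Set.image_image, Set.image_id']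
  have hPU : ∀ p ∈ P, p.2 ∈ U := by
    simp only [P, Set.mem_iUnion, Set.mem_image]
    rintro _ ⟨k, x, hx, rfl⟩
    exact hπU k x hx
  have hPW : ∀ p ∈ P, ∀ w ∈ W, A p.1 + B p.2 + w ∈ Prod.fst '' P := by
    simp only [hP, P, Set.mem_iUnion, Set.mem_image]
    rintro _ ⟨k, x, hx, rfl⟩ w hw
    exact ⟨k, hInv k x hx w hw⟩
  rw [← hP]
  exact isRobustControlInvariant_convexHull_image_fst hU hPU hPW

/-- Proposition 1: the convex hull of robustly invariant safe sets is a robust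
control invariant set for the linear system `x⁺ = A x + B u + w`. -/
theorem convexSafeSet_robust_control_invariant
    {n d j : ℕ}
    (A : (Fin n → ℝ) →ₗ[ℝ] (Fin n → ℝ)) (B : (Fin d → ℝ) →ₗ[ℝ] (Fin n → ℝ))
    (W X : Set (Fin n → ℝ)) (U : Set (Fin d → ℝ))
    (hU : Convex ℝ U)
    (S : Fin (j + 1) → Set (Fin n → ℝ))
    (π : Fin (j + 1) → (Fin n → ℝ) → (Fin d → ℝ))
    (hSX : ∀ k, S k ⊆ X)
    (hπU : ∀ k, ∀ x ∈ S k, π k x ∈ U)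
    (hInv : ∀ k, ∀ x ∈ S k, ∀ w ∈ W, A x + B (π k x) + w ∈ S k) :
    ∀ x ∈ convexHull ℝ (⋃ k, S k), ∃ u ∈ U, ∀ w ∈ W,
      A x + B u + w ∈ convexHull ℝ (⋃ k, S k) :=
  convexSafeSet_robust_control_invariant_general A B W U hU S π hπU hInv
end

section
/- Assume U ⊆ ℝ^d is convex and h : ℝ^n × ℝ^d → ℝ is jointly convex (ConvexOn ℝ on the whole space). For each k ∈ {0,…,j} assume: (i) for all x ∈ S_k, π_k x ∈ U; (ii) for all x ∈ S_k and all w ∈ W, A x + B (π_k x) + w ∈ S_k; (iii) L_k ≥ 0; and (iv) for all x ∈ S_k and all w ∈ W, h(x, π_k x) + L_k(A x + B (π_k x) + w) ≤ L_k x (the Bellman-type worst-case cost-to-go inequality). Then Q is a robust control Lyapunov function on the convex safe set: for every x ∈ convexHull ℝ (⋃_{k≤j} S_k) and every ε > 0 there exists u ∈ U such that for all w ∈ W, h(x,u) + Q(A x + B u + w) ≤ Q(x) + ε. -/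
/-- Proposition 2: the value function `Q`, obtained by convexifying the
epigraphs of the worst-case cost-to-go functions `L k`, is a robust control
Lyapunov function on the convex safe set (up to an arbitrary `ε > 0`). -/
theorem Qfun_robust_control_Lyapunov
    {n d j : ℕ}
    (A : (Fin n → ℝ) →ₗ[ℝ] (Fin n → ℝ)) (B : (Fin d → ℝ) →ₗ[ℝ] (Fin n → ℝ))
    (W X : Set (Fin n → ℝ)) (U : Set (Fin d → ℝ))
    (hU : Convex ℝ U)
    (h : (Fin n → ℝ) × (Fin d → ℝ) → ℝ)
    (hconv : ConvexOn ℝ Set.univ h)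
    (S : Fin (j + 1) → Set (Fin n → ℝ))
    (π : Fin (j + 1) → (Fin n → ℝ) → (Fin d → ℝ))
    (L : Fin (j + 1) → (Fin n → ℝ) → ℝ)
    (hSX : ∀ k, S k ⊆ X)
    (hπU : ∀ k, ∀ x ∈ S k, π k x ∈ U)
    (hInv : ∀ k, ∀ x ∈ S k, ∀ w ∈ W, A x + B (π k x) + w ∈ S k)
    (hL0 : ∀ k x, 0 ≤ L k x)
    (hBell : ∀ k, ∀ x ∈ S k, ∀ w ∈ W,
      h (x, π k x) + L k (A x + B (π k x) + w) ≤ L k x)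
    (E : Set ((Fin n → ℝ) × ℝ))
    (hE : E = convexHull ℝ {p : (Fin n → ℝ) × ℝ | ∃ k, p.1 ∈ S k ∧ L k p.1 ≤ p.2})
    (Q : (Fin n → ℝ) → ℝ)
    (hQ : ∀ x, Q x = sInf {μ : ℝ | (x, μ) ∈ E}) :
    ∀ x ∈ convexHull ℝ (⋃ k, S k), ∀ ε > 0, ∃ u ∈ U, ∀ w ∈ W,
      h (x, u) + Q (A x + B u + w) ≤ Q x + ε := by
  classical
  set T : Set ((Fin n → ℝ) × ℝ) := {p | ∃ k, p.1 ∈ S k ∧ L k p.1 ≤ p.2} with hT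
  have hTE : T ⊆ E := hE ▸ subset_convexHull ℝ T
  have hEconv : Convex ℝ E := hE ▸ convex_convexHull ℝ T
  -- every point of E has nonnegative second coordinate
  have hE2 : ∀ p ∈ E, (0:ℝ) ≤ p.2 := by
    intro p hp
    have hsub : convexHull ℝ T ⊆ (LinearMap.snd ℝ (Fin n → ℝ) ℝ) ⁻¹' Set.Ici 0 := by
      apply convexHull_min
      · rintro q ⟨k, -, hk2⟩
        exact le_trans (hL0 k q.1) hk2
      · exact (convex_Ici (0:ℝ)).linear_preimage _
    exact hsub (hE ▸ hp)
  have hbdd : ∀ x' : Fin n → ℝ, BddBelow {μ : ℝ | (x', μ) ∈ E} :=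
    fun x' => ⟨0, fun μ hμ => hE2 (x', μ) hμ⟩
  intro x hx ε hε
  -- Nonemptiness of the section at x
  rw [convexHull_eq] at hx
  obtain ⟨ι0, t0, c0, z0, hc0, hc0s, hz0, hcm0⟩ := hx
  have hz0' : ∀ i ∈ t0, ∃ k, z0 i ∈ S k := by
    intro i hi
    simpa using hz0 i hi
  choose! k0 hk0 using hz0'
  have hne : {μ : ℝ | (x, μ) ∈ E}.Nonempty := by
    refine ⟨∑ i ∈ t0, c0 i * L (k0 i) (z0 i), ?_⟩
    have hmem : ∑ i ∈ t0, c0 i • ((z0 i, L (k0 i) (z0 i)) : (Fin n → ℝ) × ℝ) ∈ E := by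
      apply hEconv.sum_mem hc0 hc0s
      intro i hi
      exact hTE ⟨k0 i, hk0 i hi, le_refl _⟩
    have heq : ∑ i ∈ t0, c0 i • ((z0 i, L (k0 i) (z0 i)) : (Fin n → ℝ) × ℝ)
        = (x, ∑ i ∈ t0, c0 i * L (k0 i) (z0 i)) := by
      rw [← hcm0, Finset.centerMass_eq_of_sum_1 _ _ hc0s]
      ext <;> simp [Prod.fst_sum, Prod.snd_sum]
    rw [heq] at hmem
    exact hmem
  -- pick μ close to the infimum
  obtain ⟨μ, hμE, hμlt⟩ := Real.lt_sInf_add_pos hne hε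
  rw [← hQ x] at hμlt
  -- decompose (x, μ) as a convex combination of epigraph points
  have hμE' : (x, μ) ∈ convexHull ℝ T := hE ▸ hμE
  rw [convexHull_eq] at hμE'
  obtain ⟨ι, t, c, z, hc, hcs, hz, hcm⟩ := hμE'
  choose! k hk1 hk2 using hz
  -- components
  have hcm' : ∑ i ∈ t, c i • z i = (x, μ) := by
    rw [← hcm, Finset.centerMass_eq_of_sum_1 _ _ hcs]
  have hx1 : ∑ i ∈ t, c i • (z i).1 = x := by
    have := congrArg Prod.fst hcm'
    simpa [Prod.fst_sum] using this
  have hx2 : ∑ i ∈ t, c i * (z i).2 = μ := by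
    have := congrArg Prod.snd hcm'
    simpa [Prod.snd_sum] using this
  -- the control input
  refine ⟨∑ i ∈ t, c i • π (k i) (z i).1, ?_, ?_⟩
  · exact hU.sum_mem hc hcs (fun i hi => hπU (k i) (z i).1 (hk1 i hi))
  intro w hw
  set u : Fin d → ℝ := ∑ i ∈ t, c i • π (k i) (z i).1 with hu
  set y : ι → (Fin n → ℝ) := fun i => A (z i).1 + B (π (k i) (z i).1) + w with hy
  have hnext : A x + B u + w = ∑ i ∈ t, c i • y i := by
    have hAx : A x = ∑ i ∈ t, c i • A (z i).1 := by
      rw [← hx1, map_sum]; simp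
    have hBu : B u = ∑ i ∈ t, c i • B (π (k i) (z i).1) := by
      rw [hu, map_sum]; simp
    have hw1 : w = ∑ i ∈ t, c i • w := by
      rw [← Finset.sum_smul, hcs, one_smul]
    rw [hAx, hBu]
    calc (∑ i ∈ t, c i • A (z i).1) + (∑ i ∈ t, c i • B (π (k i) (z i).1)) + w
        = ∑ i ∈ t, (c i • A (z i).1 + c i • B (π (k i) (z i).1) + c i • w) := by
          rw [Finset.sum_add_distrib, Finset.sum_add_distrib, ← hw1]
      _ = ∑ i ∈ t, c i • y i := by
          apply Finset.sum_congr rfl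
          intro i hi
          simp [hy, smul_add]
  -- next state value bound
  have hyS : ∀ i ∈ t, y i ∈ S (k i) := fun i hi => hInv (k i) (z i).1 (hk1 i hi) w hw
  have hnextE : (A x + B u + w, ∑ i ∈ t, c i * L (k i) (y i)) ∈ E := by
    have hmem : ∑ i ∈ t, c i • ((y i, L (k i) (y i)) : (Fin n → ℝ) × ℝ) ∈ E := by
      apply hEconv.sum_mem hc hcs
      intro i hi
      exact hTE ⟨k i, hyS i hi, le_refl _⟩
    have heq : ∑ i ∈ t, c i • ((y i, L (k i) (y i)) : (Fin n → ℝ) × ℝ)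
        = (A x + B u + w, ∑ i ∈ t, c i * L (k i) (y i)) := by
      rw [Prod.ext_iff]
      constructor
      · rw [Prod.fst_sum]; simpa using hnext.symm
      · rw [Prod.snd_sum]; simp
    rwa [heq] at hmem
  have hQnext : Q (A x + B u + w) ≤ ∑ i ∈ t, c i * L (k i) (y i) := by
    rw [hQ]
    exact csInf_le (hbdd _) hnextE
  -- cost bound via Jensen
  have hxu : (x, u) = ∑ i ∈ t, c i • (((z i).1, π (k i) (z i).1) : (Fin n → ℝ) × (Fin d → ℝ)) := by
    rw [Prod.ext_iff]
    constructor
    · rw [Prod.fst_sum]; simpa using hx1.symm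
    · rw [Prod.snd_sum]; simpa using hu
  have hhxu : h (x, u) ≤ ∑ i ∈ t, c i * h ((z i).1, π (k i) (z i).1) := by
    rw [hxu]
    exact hconv.map_sum_le hc hcs (fun i hi => Set.mem_univ _)
  -- combine
  have hsum : ∑ i ∈ t, c i * h ((z i).1, π (k i) (z i).1) + ∑ i ∈ t, c i * L (k i) (y i)
      ≤ μ := by
    rw [← hx2, ← Finset.sum_add_distrib]
    apply Finset.sum_le_sum
    intro i hi
    have hb := hBell (k i) (z i).1 (hk1 i hi) w hw
    have : c i * h ((z i).1, π (k i) (z i).1) + c i * L (k i) (y i)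
        = c i * (h ((z i).1, π (k i) (z i).1) + L (k i) (y i)) := by ring
    rw [this]
    exact mul_le_mul_of_nonneg_left (le_trans hb (hk2 i hi)) (hc i hi)
  calc h (x, u) + Q (A x + B u + w)
      ≤ ∑ i ∈ t, c i * h ((z i).1, π (k i) (z i).1) + ∑ i ∈ t, c i * L (k i) (y i) :=
        add_le_add hhxu hQnext
    _ ≤ μ := hsum
    _ ≤ Q x + ε := le_of_lt hμlt
end

section
/- Let U ⊆ ℝ^d be convex and for each k ∈ {0,…,j} let S_k ⊆ X with policies π_k : ℝ^n → ℝ^d such that for all x ∈ S_k, π_k x ∈ U and for all w ∈ W, A x + B (π_k x) + w ∈ S_k. Let CS = convexHull ℝ (⋃_{k≤j} S_k). Then there exists a single feedback map κ : ℝ^n → ℝ^d such that for all x ∈ CS, κ x ∈ U and for all w ∈ W, A x + B (κ x) + w ∈ CS; consequently, for every x₀ ∈ CS and every disturbance sequence with values in W, the closed-loop trajectory under κ remains in CS for all times with all inputs in U. -/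
/-!
The set `Pre(C)` of states from which some admissible input drives every disturbed successor into
`C` is convex whenever `U` and `C` are, because the dynamics are affine in the pair (state, input)
and a convex combination of inputs is again admissible. Each `S k` lies in `Pre(S k)`, hence in
`Pre(CS)`, so `CS ⊆ Pre(CS)` by minimality of the convex hull; choosing an input pointwise gives
the feedback `κ`, and invariance propagates along trajectories by induction on time.
-/

section RobustInvariance

variable {𝕜 E F : Type*} [Semiring 𝕜]
  [AddCommMonoid E] [Module 𝕜 E] [AddCommMonoid F] [Module 𝕜 F]
  (A : E →ₗ[𝕜] E) (B : F →ₗ[𝕜] E) (U : Set F) (W : Set E)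

/-- The robust one-step predecessor set `Pre(C)` of `x⁺ = A x + B u + w`. -/
def robustPre (C : Set E) : Set E :=
  {x | ∃ u ∈ U, ∀ w ∈ W, A x + B u + w ∈ C}

def IsRobustInvariant (C : Set E) (κ : E → F) : Prop :=
  ∀ x ∈ C, κ x ∈ U ∧ ∀ w ∈ W, A x + B (κ x) + w ∈ C

variable {A B U W}

theorem robustPre_mono {C D : Set E} (h : C ⊆ D) : robustPre A B U W C ⊆ robustPre A B U W D :=
  fun _ ⟨u, hu, hC⟩ => ⟨u, hu, fun w hw => h (hC w hw)⟩

theorem IsRobustInvariant.subset_robustPre {C : Set E} {κ : E → F}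
    (h : IsRobustInvariant A B U W C κ) : C ⊆ robustPre A B U W C :=
  fun x hx => ⟨κ x, (h x hx).1, (h x hx).2⟩

theorem convex_robustPre [PartialOrder 𝕜] {C : Set E} (hU : Convex 𝕜 U) (hC : Convex 𝕜 C) :
    Convex 𝕜 (robustPre A B U W C) := by
  rintro x ⟨u, hu, hx⟩ y ⟨v, hv, hy⟩ a b ha hb hab
  refine ⟨a • u + b • v, hU hu hv ha hb hab, fun w hw => ?_⟩
  have hcomb : A (a • x + b • y) + B (a • u + b • v) + w
      = a • (A x + B u + w) + b • (A y + B v + w) := by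
    conv_lhs => rw [← one_smul 𝕜 w, ← hab]
    simp only [map_add, map_smul, add_smul, smul_add]
    abel
  rw [hcomb]
  exact hC (hx w hw) (hy w hw) ha hb hab

theorem convexHull_iUnion_subset_robustPre [PartialOrder 𝕜] {ι : Type*} {S : ι → Set E} {π : ι → E → F}
    (hU : Convex 𝕜 U) (hS : ∀ k, IsRobustInvariant A B U W (S k) (π k)) :
    convexHull 𝕜 (⋃ k, S k) ⊆ robustPre A B U W (convexHull 𝕜 (⋃ k, S k)) := by
  refine convexHull_min (Set.iUnion_subset fun k => ?_) (convex_robustPre hU (convex_convexHull 𝕜 _))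
  exact (hS k).subset_robustPre.trans
    (robustPre_mono ((Set.subset_iUnion S k).trans (subset_convexHull 𝕜 _)))

theorem exists_isRobustInvariant_of_subset_robustPre {C : Set E} (h : C ⊆ robustPre A B U W C) :
    ∃ κ : E → F, IsRobustInvariant A B U W C κ := by
  choose! κ hκU hκ using h
  exact ⟨κ, fun x hx => ⟨hκU hx, hκ hx⟩⟩

theorem IsRobustInvariant.trajectory_mem {C : Set E} {κ : E → F}
    (h : IsRobustInvariant A B U W C κ) {w : ℕ → E} (hw : ∀ k, w k ∈ W) {x : ℕ → E}
    (hx0 : x 0 ∈ C) (hstep : ∀ k, x (k + 1) = A (x k) + B (κ (x k)) + w k) (k : ℕ) :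
    x k ∈ C ∧ κ (x k) ∈ U := by
  have hxC : x k ∈ C := by
    induction k with
    | zero => exact hx0
    | succ m ih => exact hstep m ▸ (h _ ih).2 _ (hw m)
  exact ⟨hxC, (h _ hxC).1⟩

end RobustInvariance

theorem convexSafeSet_safe_policy_general
    {n d j : ℕ}
    (A : (Fin n → ℝ) →ₗ[ℝ] (Fin n → ℝ)) (B : (Fin d → ℝ) →ₗ[ℝ] (Fin n → ℝ))
    (W : Set (Fin n → ℝ)) (U : Set (Fin d → ℝ))
    (hU : Convex ℝ U)
    (S : Fin (j + 1) → Set (Fin n → ℝ))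
    (π : Fin (j + 1) → (Fin n → ℝ) → (Fin d → ℝ))
    (hπU : ∀ k, ∀ x ∈ S k, π k x ∈ U)
    (hInv : ∀ k, ∀ x ∈ S k, ∀ w ∈ W, A x + B (π k x) + w ∈ S k) :
    ∃ κ : (Fin n → ℝ) → (Fin d → ℝ),
      (∀ x ∈ convexHull ℝ (⋃ k, S k), κ x ∈ U ∧
        ∀ w ∈ W, A x + B (κ x) + w ∈ convexHull ℝ (⋃ k, S k)) ∧
      ∀ x₀ ∈ convexHull ℝ (⋃ k, S k), ∀ w : ℕ → (Fin n → ℝ), (∀ k, w k ∈ W) →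
        ∀ x : ℕ → (Fin n → ℝ), x 0 = x₀ →
          (∀ k, x (k + 1) = A (x k) + B (κ (x k)) + w k) →
          ∀ k, x k ∈ convexHull ℝ (⋃ k, S k) ∧ κ (x k) ∈ U := by
  have hS : ∀ k, IsRobustInvariant A B U W (S k) (π k) :=
    fun k x hx => ⟨hπU k x hx, hInv k x hx⟩
  obtain ⟨κ, hκ⟩ :=
    exists_isRobustInvariant_of_subset_robustPre (convexHull_iUnion_subset_robustPre hU hS)
  exact ⟨κ, hκ, fun x₀ hx₀ w hw x hx0 hstep => hκ.trajectory_mem hw (hx0 ▸ hx₀) hstep⟩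

/-- Corollary of Proposition 1 used in Theorem 1: there is a single feedback
map `κ` keeping the convex safe set `CS = convexHull ℝ (⋃ k, S k)` robustly
invariant with inputs in `U`; consequently every closed-loop trajectory under
`κ` starting in `CS` remains in `CS` with all inputs in `U`. -/
theorem convexSafeSet_safe_policy
    {n d j : ℕ}
    (A : (Fin n → ℝ) →ₗ[ℝ] (Fin n → ℝ)) (B : (Fin d → ℝ) →ₗ[ℝ] (Fin n → ℝ))
    (W X : Set (Fin n → ℝ)) (U : Set (Fin d → ℝ))
    (hU : Convex ℝ U)
    (S : Fin (j + 1) → Set (Fin n → ℝ))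
    (π : Fin (j + 1) → (Fin n → ℝ) → (Fin d → ℝ))
    (hSX : ∀ k, S k ⊆ X)
    (hπU : ∀ k, ∀ x ∈ S k, π k x ∈ U)
    (hInv : ∀ k, ∀ x ∈ S k, ∀ w ∈ W, A x + B (π k x) + w ∈ S k) :
    ∃ κ : (Fin n → ℝ) → (Fin d → ℝ),
      (∀ x ∈ convexHull ℝ (⋃ k, S k), κ x ∈ U ∧
        ∀ w ∈ W, A x + B (κ x) + w ∈ convexHull ℝ (⋃ k, S k)) ∧
      ∀ x₀ ∈ convexHull ℝ (⋃ k, S k), ∀ w : ℕ → (Fin n → ℝ), (∀ k, w k ∈ W) →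
        ∀ x : ℕ → (Fin n → ℝ), x 0 = x₀ →
          (∀ k, x (k + 1) = A (x k) + B (κ (x k)) + w k) →
          ∀ k, x k ∈ convexHull ℝ (⋃ k, S k) ∧ κ (x k) ∈ U :=
  convexSafeSet_safe_policy_general A B W U hU S π hπU hInv
end

section
/- Assume the robust control Lyapunov hypothesis holds. Then the finite-horizon min–max value functions are pointwise non-increasing in the horizon: for every k ∈ ℕ and every x ∈ ℝ^n, V (k+1) x ≤ V k x. -/
/-!
The Bellman operator is monotone, and the robust control Lyapunov hypothesis says exactly that one
Bellman step does not increase the terminal cost: `T Q̄ ≤ Q̄`. Since `V k = T^[k] Q̄`, applying the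
monotone map `T` to this inequality `k` times gives `V (k + 1) ≤ V k`.
-/

section MinMaxBellman

variable {S I D : Type*} {X : Set S} {U : Set I} {W : Set D} {next : S → I → D → S}
  {h : S × I → ℝ} {T : (S → EReal) → S → EReal}

theorem monotone_of_eq_minMax
    (hTin : ∀ f, ∀ x ∈ X, T f x = ⨅ u ∈ U, ⨆ w ∈ W, ((h (x, u) : EReal) + f (next x u w)))
    (hTout : ∀ f, ∀ x ∉ X, T f x = ⊤) :
    Monotone T := by
  intro f g hfg x
  by_cases hx : x ∈ X
  · rw [hTin f x hx, hTin g x hx]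
    exact iInf₂_mono fun u _ => iSup₂_mono fun w _ => add_le_add_right (hfg _) _
  · rw [hTout f x hx, hTout g x hx]

theorem minMax_le_terminal_of_lyapunov {CS : Set S} (hCSX : CS ⊆ X) {Q : S → ℝ}
    {Qbar : S → EReal} (hQbarIn : ∀ x ∈ CS, Qbar x = (Q x : EReal))
    (hQbarOut : ∀ x ∉ CS, Qbar x = ⊤)
    (hTin : ∀ f, ∀ x ∈ X, T f x = ⨅ u ∈ U, ⨆ w ∈ W, ((h (x, u) : EReal) + f (next x u w)))
    (hRCL : ∀ x ∈ CS, ∃ u ∈ U, ∀ w ∈ W,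
      next x u w ∈ CS ∧ h (x, u) + Q (next x u w) ≤ Q x) :
    T Qbar ≤ Qbar := by
  intro x
  by_cases hx : x ∈ CS
  · obtain ⟨u, hu, hdecrease⟩ := hRCL x hx
    rw [hTin Qbar x (hCSX hx), hQbarIn x hx]
    refine (iInf₂_le u hu).trans (iSup₂_le fun w hw => ?_)
    obtain ⟨hnext, hle⟩ := hdecrease w hw
    rw [hQbarIn _ hnext, ← EReal.coe_add]
    exact EReal.coe_le_coe_iff.mpr hle
  · rw [hQbarOut x hx]
    exact le_top

end MinMaxBellman

theorem eq_iterate_of_succ {α : Type*} {T : α → α} {V : ℕ → α}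
    (hVs : ∀ k, V (k + 1) = T (V k)) (k : ℕ) :
    V k = T^[k] (V 0) := by
  induction k with
  | zero => rfl
  | succ k ih => rw [hVs, ih, Function.iterate_succ_apply']

theorem value_functions_monotone_in_horizon_general
    {n d : ℕ}
    (A : (Fin n → ℝ) →ₗ[ℝ] (Fin n → ℝ)) (B : (Fin d → ℝ) →ₗ[ℝ] (Fin n → ℝ))
    (W X : Set (Fin n → ℝ)) (U : Set (Fin d → ℝ))
    (h : (Fin n → ℝ) × (Fin d → ℝ) → ℝ)
    (CS : Set (Fin n → ℝ)) (hCSX : CS ⊆ X)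
    (Q : (Fin n → ℝ) → ℝ)
    (Qbar : (Fin n → ℝ) → EReal)
    (hQbarIn : ∀ x ∈ CS, Qbar x = (Q x : EReal))
    (hQbarOut : ∀ x ∉ CS, Qbar x = ⊤)
    (T : ((Fin n → ℝ) → EReal) → (Fin n → ℝ) → EReal)
    (hTin : ∀ f, ∀ x ∈ X, T f x =
      ⨅ u ∈ U, ⨆ w ∈ W, ((h (x, u) : EReal) + f (A x + B u + w)))
    (hTout : ∀ f, ∀ x ∉ X, T f x = ⊤)
    (V : ℕ → (Fin n → ℝ) → EReal)
    (hV0 : V 0 = Qbar) (hVs : ∀ k, V (k + 1) = T (V k))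
    (hRCL : ∀ x ∈ CS, ∃ u ∈ U, ∀ w ∈ W,
      A x + B u + w ∈ CS ∧ h (x, u) + Q (A x + B u + w) ≤ Q x) :
    ∀ (k : ℕ) (x : Fin n → ℝ), V (k + 1) x ≤ V k x := by
  intro k
  have hT : Monotone T := monotone_of_eq_minMax hTin hTout
  have hstep : T Qbar ≤ Qbar := minMax_le_terminal_of_lyapunov hCSX hQbarIn hQbarOut hTin hRCL
  have hanti : Antitone fun k => T^[k] Qbar := hT.antitone_iterate_of_map_le hstep
  rw [eq_iterate_of_succ hVs, eq_iterate_of_succ hVs k, hV0]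
  exact hanti k.le_succ

/-- Key monotonicity step of Theorems 1 and 2: under the robust control
Lyapunov hypothesis on the terminal cost `Q` and terminal set `CS`, the
finite-horizon min–max value functions `V k` are pointwise non-increasing in
the horizon. -/
theorem value_functions_monotone_in_horizon
    {n d : ℕ}
    (A : (Fin n → ℝ) →ₗ[ℝ] (Fin n → ℝ)) (B : (Fin d → ℝ) →ₗ[ℝ] (Fin n → ℝ))
    (W X : Set (Fin n → ℝ)) (U : Set (Fin d → ℝ))
    (hW : W.Nonempty)
    (h : (Fin n → ℝ) × (Fin d → ℝ) → ℝ)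
    (hpos : ∀ x u, 0 ≤ h (x, u))
    (CS : Set (Fin n → ℝ)) (hCSX : CS ⊆ X)
    (Q : (Fin n → ℝ) → ℝ) (hQ0 : ∀ x ∈ CS, 0 ≤ Q x)
    (Qbar : (Fin n → ℝ) → EReal)
    (hQbarIn : ∀ x ∈ CS, Qbar x = (Q x : EReal))
    (hQbarOut : ∀ x ∉ CS, Qbar x = ⊤)
    (T : ((Fin n → ℝ) → EReal) → (Fin n → ℝ) → EReal)
    (hTin : ∀ f, ∀ x ∈ X, T f x =
      ⨅ u ∈ U, ⨆ w ∈ W, ((h (x, u) : EReal) + f (A x + B u + w)))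
    (hTout : ∀ f, ∀ x ∉ X, T f x = ⊤)
    (V : ℕ → (Fin n → ℝ) → EReal)
    (hV0 : V 0 = Qbar) (hVs : ∀ k, V (k + 1) = T (V k))
    (hRCL : ∀ x ∈ CS, ∃ u ∈ U, ∀ w ∈ W,
      A x + B u + w ∈ CS ∧ h (x, u) + Q (A x + B u + w) ≤ Q x) :
    ∀ (k : ℕ) (x : Fin n → ℝ), V (k + 1) x ≤ V k x :=
  value_functions_monotone_in_horizon_general A B W X U h CS hCSX Q Qbar hQbarIn hQbarOut T hTin
    hTout V hV0 hVs hRCL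
end

section
/- Assume the robust control Lyapunov hypothesis holds. Then for every horizon N and every x ∈ CS, the min–max LMPC value is bounded by the terminal cost: V N x ≤ (Q x : EReal). In particular, V N x < ⊤ for all x ∈ CS, so every state of the safe set is feasible for the LMPC problem. -/
theorem iInf_iSup_cost_add_le_of_robust_decrease {α β ω : Type*} {U : Set β} {W : Set ω}
    {S : Set α} {f : α → EReal} {Q : α → ℝ} (hf : ∀ y ∈ S, f y ≤ Q y)
    (next : β → ω → α) (cost : β → ℝ) {q : ℝ}
    (hdec : ∃ u ∈ U, ∀ w ∈ W, next u w ∈ S ∧ cost u + Q (next u w) ≤ q) :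
    ⨅ u ∈ U, ⨆ w ∈ W, ((cost u : EReal) + f (next u w)) ≤ q := by
  obtain ⟨u, hu, hw⟩ := hdec
  refine (iInf₂_le u hu).trans (iSup₂_le fun w hwW => ?_)
  obtain ⟨hmem, hle⟩ := hw w hwW
  calc (cost u : EReal) + f (next u w)
      ≤ (cost u : EReal) + (Q (next u w) : EReal) := add_le_add_right (hf _ hmem) _
    _ = ((cost u + Q (next u w) : ℝ) : EReal) := (EReal.coe_add _ _).symm
    _ ≤ q := EReal.coe_le_coe_iff.mpr hle

theorem lmpc_value_le_terminal_cost_general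
    {n d : ℕ}
    (A : (Fin n → ℝ) →ₗ[ℝ] (Fin n → ℝ)) (B : (Fin d → ℝ) →ₗ[ℝ] (Fin n → ℝ))
    (W X : Set (Fin n → ℝ)) (U : Set (Fin d → ℝ))
    (h : (Fin n → ℝ) × (Fin d → ℝ) → ℝ)
    (CS : Set (Fin n → ℝ)) (hCSX : CS ⊆ X)
    (Q : (Fin n → ℝ) → ℝ)
    (Qbar : (Fin n → ℝ) → EReal)
    (hQbarIn : ∀ x ∈ CS, Qbar x = (Q x : EReal))
    (T : ((Fin n → ℝ) → EReal) → (Fin n → ℝ) → EReal)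
    (hTin : ∀ f, ∀ x ∈ X, T f x =
      ⨅ u ∈ U, ⨆ w ∈ W, ((h (x, u) : EReal) + f (A x + B u + w)))
    (V : ℕ → (Fin n → ℝ) → EReal)
    (hV0 : V 0 = Qbar) (hVs : ∀ k, V (k + 1) = T (V k))
    (hRCL : ∀ x ∈ CS, ∃ u ∈ U, ∀ w ∈ W,
      A x + B u + w ∈ CS ∧ h (x, u) + Q (A x + B u + w) ≤ Q x) :
    ∀ (N : ℕ), ∀ x ∈ CS, V N x ≤ (Q x : EReal) ∧ V N x < ⊤ := by
  have hle : ∀ N, ∀ x ∈ CS, V N x ≤ (Q x : EReal) := by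
    intro N
    induction N with
    | zero => intro x hx; rw [hV0, hQbarIn x hx]
    | succ k ih =>
      intro x hx
      rw [hVs k, hTin (V k) x (hCSX hx)]
      exact iInf_iSup_cost_add_le_of_robust_decrease ih (fun u w => A x + B u + w)
        (fun u => h (x, u)) (hRCL x hx)
  intro N x hx
  exact ⟨hle N x hx, (hle N x hx).trans_lt (EReal.coe_lt_top _)⟩

/-- Feasibility of the LMPC from the safe set (inequality
`J^{LMPC}(x₀) ≤ Q^j(x₀)` used in the proof of Theorem 2): under the robust
control Lyapunov hypothesis, the min–max value over any horizon `N` is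
bounded by the terminal cost on `CS`; in particular it is finite there. -/
theorem lmpc_value_le_terminal_cost
    {n d : ℕ}
    (A : (Fin n → ℝ) →ₗ[ℝ] (Fin n → ℝ)) (B : (Fin d → ℝ) →ₗ[ℝ] (Fin n → ℝ))
    (W X : Set (Fin n → ℝ)) (U : Set (Fin d → ℝ))
    (hW : W.Nonempty)
    (h : (Fin n → ℝ) × (Fin d → ℝ) → ℝ)
    (hpos : ∀ x u, 0 ≤ h (x, u))
    (CS : Set (Fin n → ℝ)) (hCSX : CS ⊆ X)
    (Q : (Fin n → ℝ) → ℝ) (hQ0 : ∀ x ∈ CS, 0 ≤ Q x)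
    (Qbar : (Fin n → ℝ) → EReal)
    (hQbarIn : ∀ x ∈ CS, Qbar x = (Q x : EReal))
    (hQbarOut : ∀ x ∉ CS, Qbar x = ⊤)
    (T : ((Fin n → ℝ) → EReal) → (Fin n → ℝ) → EReal)
    (hTin : ∀ f, ∀ x ∈ X, T f x =
      ⨅ u ∈ U, ⨆ w ∈ W, ((h (x, u) : EReal) + f (A x + B u + w)))
    (hTout : ∀ f, ∀ x ∉ X, T f x = ⊤)
    (V : ℕ → (Fin n → ℝ) → EReal)
    (hV0 : V 0 = Qbar) (hVs : ∀ k, V (k + 1) = T (V k))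
    (hRCL : ∀ x ∈ CS, ∃ u ∈ U, ∀ w ∈ W,
      A x + B u + w ∈ CS ∧ h (x, u) + Q (A x + B u + w) ≤ Q x) :
    ∀ (N : ℕ), ∀ x ∈ CS, V N x ≤ (Q x : EReal) ∧ V N x < ⊤ :=
  lmpc_value_le_terminal_cost_general A B W X U h CS hCSX Q Qbar hQbarIn T hTin V hV0 hVs hRCL
end

section
/- Assume the robust control Lyapunov hypothesis holds, and fix a horizon N ≥ 1. Let x ∈ X and let u* ∈ U attain the infimum defining V N at x, i.e. ⨆_{w ∈ W} ((h(x,u*) : EReal) + V (N−1) (A x + B u* + w)) ≤ V N x. Then the value function decreases robustly along the closed loop: for every w ∈ W, (h(x,u*) : EReal) + V N (A x + B u* + w) ≤ V N x. -/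
/-! The value functions decrease monotonically, `V (k + 1) ≤ V k`: the robust control Lyapunov
hypothesis gives `V 1 = T Q̄ ≤ Q̄`, and the Bellman operator is monotone. Hence
`h(x,u*) + V N (x⁺) ≤ h(x,u*) + V (N-1) (x⁺) ≤ ⨆_w (h(x,u*) + V (N-1) (x⁺)) ≤ V N x`. -/

section Bellman

variable {E F : Type*} [Add E]

open Classical in
noncomputable def bellman (A : E → E) (B : F → E) (W X : Set E) (U : Set F) (h : E × F → ℝ)
    (f : E → EReal) (x : E) : EReal :=
  if x ∈ X then ⨅ u ∈ U, ⨆ w ∈ W, ((h (x, u) : EReal) + f (A x + B u + w)) else ⊤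

variable (A : E → E) (B : F → E) (W X : Set E) (U : Set F) (h : E × F → ℝ)

theorem bellman_mono : Monotone (bellman A B W X U h) := by
  intro f g hfg x
  unfold bellman
  split_ifs
  · exact iInf₂_mono fun u _ => iSup₂_mono fun w _ => add_le_add_right (hfg _) _
  · exact le_rfl

theorem bellman_le_of_robust_lyapunov {CS : Set E} (hCSX : CS ⊆ X) {Q : E → ℝ}
    {Qbar : E → EReal} (hQbarIn : ∀ x ∈ CS, Qbar x = (Q x : EReal))
    (hQbarOut : ∀ x ∉ CS, Qbar x = ⊤)
    (hRCL : ∀ x ∈ CS, ∃ u ∈ U, ∀ w ∈ W,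
      A x + B u + w ∈ CS ∧ h (x, u) + Q (A x + B u + w) ≤ Q x) :
    bellman A B W X U h Qbar ≤ Qbar := by
  intro x
  by_cases hxCS : x ∈ CS
  · obtain ⟨u, hu, hdecr⟩ := hRCL x hxCS
    rw [bellman, if_pos (hCSX hxCS), hQbarIn x hxCS]
    refine (iInf₂_le u hu).trans (iSup₂_le fun w hw => ?_)
    obtain ⟨hnext, hle⟩ := hdecr w hw
    rw [hQbarIn _ hnext, ← EReal.coe_add]
    exact EReal.coe_le_coe_iff.mpr hle
  · rw [hQbarOut x hxCS]
    exact le_top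

end Bellman

theorem antitone_of_map_le {α : Type*} [Preorder α] {T : α → α} (hT : Monotone T)
    {V : ℕ → α} (hVs : ∀ k, V (k + 1) = T (V k)) (h0 : T (V 0) ≤ V 0) : Antitone V := by
  refine antitone_nat_of_succ_le fun k => ?_
  induction k with
  | zero => rw [hVs]; exact h0
  | succ k ih => exact (hVs (k + 1)).trans_le ((hT ih).trans_eq (hVs k).symm)

theorem lmpc_value_robust_decrease_general
    {n d : ℕ}
    (A : (Fin n → ℝ) →ₗ[ℝ] (Fin n → ℝ)) (B : (Fin d → ℝ) →ₗ[ℝ] (Fin n → ℝ))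
    (W X : Set (Fin n → ℝ)) (U : Set (Fin d → ℝ))
    (h : (Fin n → ℝ) × (Fin d → ℝ) → ℝ)
    (CS : Set (Fin n → ℝ)) (hCSX : CS ⊆ X)
    (Q : (Fin n → ℝ) → ℝ)
    (Qbar : (Fin n → ℝ) → EReal)
    (hQbarIn : ∀ x ∈ CS, Qbar x = (Q x : EReal))
    (hQbarOut : ∀ x ∉ CS, Qbar x = ⊤)
    (T : ((Fin n → ℝ) → EReal) → (Fin n → ℝ) → EReal)
    (hTin : ∀ f, ∀ x ∈ X, T f x =
      ⨅ u ∈ U, ⨆ w ∈ W, ((h (x, u) : EReal) + f (A x + B u + w)))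
    (hTout : ∀ f, ∀ x ∉ X, T f x = ⊤)
    (V : ℕ → (Fin n → ℝ) → EReal)
    (hV0 : V 0 = Qbar) (hVs : ∀ k, V (k + 1) = T (V k))
    (hRCL : ∀ x ∈ CS, ∃ u ∈ U, ∀ w ∈ W,
      A x + B u + w ∈ CS ∧ h (x, u) + Q (A x + B u + w) ≤ Q x)
    (N : ℕ)
    (x : Fin n → ℝ)
    (u : Fin d → ℝ)
    (hopt : (⨆ w ∈ W, ((h (x, u) : EReal) + V (N - 1) (A x + B u + w))) ≤ V N x) :
    ∀ w ∈ W, (h (x, u) : EReal) + V N (A x + B u + w) ≤ V N x := by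
  have hT : T = bellman A B W X U h := by
    funext f y
    by_cases hy : y ∈ X
    · rw [hTin f y hy, bellman, if_pos hy]
    · rw [hTout f y hy, bellman, if_neg hy]
  subst hT
  have hV : Antitone V := antitone_of_map_le (bellman_mono A B W X U h) hVs
    (hV0 ▸ bellman_le_of_robust_lyapunov A B W X U h hCSX hQbarIn hQbarOut hRCL)
  intro w hw
  calc (h (x, u) : EReal) + V N (A x + B u + w)
      ≤ (h (x, u) : EReal) + V (N - 1) (A x + B u + w) :=
        add_le_add_right (hV (Nat.sub_le N 1) _) _
    _ ≤ ⨆ w ∈ W, ((h (x, u) : EReal) + V (N - 1) (A x + B u + w)) :=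
        le_iSup₂ (f := fun w _ => (h (x, u) : EReal) + V (N - 1) (A x + B u + w)) w hw
    _ ≤ V N x := hopt

/-- First display in the proof of Theorem 2: if `u*` attains the infimum
defining `V N` at `x ∈ X`, then the value function decreases robustly along
the closed loop: `h(x,u*) + V N (A x + B u* + w) ≤ V N x` for all `w ∈ W`. -/
theorem lmpc_value_robust_decrease
    {n d : ℕ}
    (A : (Fin n → ℝ) →ₗ[ℝ] (Fin n → ℝ)) (B : (Fin d → ℝ) →ₗ[ℝ] (Fin n → ℝ))
    (W X : Set (Fin n → ℝ)) (U : Set (Fin d → ℝ))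
    (hW : W.Nonempty)
    (h : (Fin n → ℝ) × (Fin d → ℝ) → ℝ)
    (hpos : ∀ x u, 0 ≤ h (x, u))
    (CS : Set (Fin n → ℝ)) (hCSX : CS ⊆ X)
    (Q : (Fin n → ℝ) → ℝ) (hQ0 : ∀ x ∈ CS, 0 ≤ Q x)
    (Qbar : (Fin n → ℝ) → EReal)
    (hQbarIn : ∀ x ∈ CS, Qbar x = (Q x : EReal))
    (hQbarOut : ∀ x ∉ CS, Qbar x = ⊤)
    (T : ((Fin n → ℝ) → EReal) → (Fin n → ℝ) → EReal)
    (hTin : ∀ f, ∀ x ∈ X, T f x =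
      ⨅ u ∈ U, ⨆ w ∈ W, ((h (x, u) : EReal) + f (A x + B u + w)))
    (hTout : ∀ f, ∀ x ∉ X, T f x = ⊤)
    (V : ℕ → (Fin n → ℝ) → EReal)
    (hV0 : V 0 = Qbar) (hVs : ∀ k, V (k + 1) = T (V k))
    (hRCL : ∀ x ∈ CS, ∃ u ∈ U, ∀ w ∈ W,
      A x + B u + w ∈ CS ∧ h (x, u) + Q (A x + B u + w) ≤ Q x)
    (N : ℕ) (hN : 1 ≤ N)
    (x : Fin n → ℝ) (hx : x ∈ X)
    (u : Fin d → ℝ) (hu : u ∈ U)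
    (hopt : (⨆ w ∈ W, ((h (x, u) : EReal) + V (N - 1) (A x + B u + w))) ≤ V N x) :
    ∀ w ∈ W, (h (x, u) : EReal) + V N (A x + B u + w) ≤ V N x :=
  lmpc_value_robust_decrease_general A B W X U h CS hCSX Q Qbar hQbarIn hQbarOut T hTin hTout V hV0
    hVs hRCL N x u hopt
end

section
/- Assume the robust control Lyapunov hypothesis holds and fix a horizon N ≥ 1. Let x : ℕ → ℝ^n, u : ℕ → ℝ^d and w : ℕ → ℝ^n satisfy: V N (x 0) ≠ ⊤; for all k, w k ∈ W, x (k+1) = A (x k) + B (u k) + w k, x k ∈ X, u k ∈ U, and u k attains the infimum defining V N at x k (i.e. ⨆_{w ∈ W} ((h(x k, u k) : EReal) + V (N−1)(A (x k) + B (u k) + w)) ≤ V N (x k)). Then (recursive feasibility and performance bound): for every t, V N (x t) ≤ V N (x 0), in particular V N (x t) ≠ ⊤, and for every horizon T, (Σ_{k<T} h(x k, u k) : EReal) ≤ V N (x 0). -/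
/-!
The robust control Lyapunov hypothesis says exactly that one Bellman step does not increase the
extended terminal cost, `T Q̄ ≤ Q̄`. Since `T` is monotone, value iteration started at `Q̄` is then
pointwise decreasing, `V N ≤ V (N - 1)`. Along a trajectory driven by minimising inputs this gives
`h (x k, u k) + V N (x (k + 1)) ≤ V N (x k)`, and telescoping this inequality, with `h ≥ 0` and
`V N ≥ 0`, yields both the monotone decrease of `V N (x t)` and the bound on the accumulated cost.
-/

open Finset

noncomputable section

section RobustBellman

variable {S I D : Type*} (X : Set S) (U : Set I) (W : Set D) (h : S × I → ℝ) (F : S → I → D → S)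

open scoped Classical in
def robustBellman (f : S → EReal) : S → EReal :=
  fun x => if x ∈ X then ⨅ u ∈ U, ⨆ w ∈ W, (h (x, u) : EReal) + f (F x u w) else ⊤

variable {X U W h F}

theorem eq_robustBellman {T : (S → EReal) → S → EReal}
    (hTin : ∀ f, ∀ x ∈ X, T f x = ⨅ u ∈ U, ⨆ w ∈ W, (h (x, u) : EReal) + f (F x u w))
    (hTout : ∀ f, ∀ x ∉ X, T f x = ⊤) :
    T = robustBellman X U W h F := by
  funext f x
  by_cases hx : x ∈ X
  · simp [robustBellman, hx, hTin f x hx]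
  · simp [robustBellman, hx, hTout f x hx]

theorem robustBellman_mono : Monotone (robustBellman X U W h F) := by
  intro f g hfg x
  unfold robustBellman
  split_ifs
  · exact iInf₂_mono fun u _ => iSup₂_mono fun w _ => add_le_add_right (hfg _) _
  · exact le_rfl

theorem robustBellman_nonneg (hW : W.Nonempty) (hh : ∀ p, 0 ≤ h p) {f : S → EReal}
    (hf : 0 ≤ f) : 0 ≤ robustBellman X U W h F f := by
  intro x
  obtain ⟨w₀, hw₀⟩ := hW
  unfold robustBellman
  split_ifs
  · exact le_iInf₂ fun u _ =>
      le_iSup₂_of_le w₀ hw₀ (add_nonneg (EReal.coe_nonneg.mpr (hh _)) (hf _))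
  · exact le_top

theorem robustBellman_le_of_controlLyapunov {CS : Set S} (hCSX : CS ⊆ X) {Q : S → ℝ}
    {Qbar : S → EReal} (hQbarIn : ∀ x ∈ CS, Qbar x = (Q x : EReal))
    (hQbarOut : ∀ x ∉ CS, Qbar x = ⊤)
    (hRCL : ∀ x ∈ CS, ∃ u ∈ U, ∀ w ∈ W, F x u w ∈ CS ∧ h (x, u) + Q (F x u w) ≤ Q x) :
    robustBellman X U W h F Qbar ≤ Qbar := by
  intro x
  by_cases hx : x ∈ CS
  · obtain ⟨u, hu, hdecrease⟩ := hRCL x hx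
    rw [robustBellman, if_pos (hCSX hx), hQbarIn x hx]
    refine iInf₂_le_of_le u hu (iSup₂_le fun w hw => ?_)
    obtain ⟨hnext, hcost⟩ := hdecrease w hw
    rw [hQbarIn _ hnext, ← EReal.coe_add]
    exact EReal.coe_le_coe_iff.mpr hcost
  · simp [hQbarOut x hx]

end RobustBellman

section ValueIteration

variable {α : Type*} [Preorder α] {Φ : α → α} {V : ℕ → α}

theorem antitone_of_succ_eq_map (hΦ : Monotone Φ) (hVs : ∀ k, V (k + 1) = Φ (V k))
    (hV1 : Φ (V 0) ≤ V 0) : Antitone V := by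
  refine antitone_nat_of_succ_le fun k => ?_
  induction k with
  | zero => rw [hVs]; exact hV1
  | succ k ih => rw [hVs (k + 1)]; exact (hΦ ih).trans_eq (hVs k).symm

theorem le_of_succ_eq_map {a : α} (hΦ : ∀ f, a ≤ f → a ≤ Φ f)
    (hVs : ∀ k, V (k + 1) = Φ (V k)) (hV0 : a ≤ V 0) (k : ℕ) : a ≤ V k := by
  induction k with
  | zero => exact hV0
  | succ k ih => rw [hVs]; exact hΦ _ ih

end ValueIteration

theorem EReal.coe_sum_add_le_of_step {a : ℕ → EReal} {c : ℕ → ℝ}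
    (hstep : ∀ k, (c k : EReal) + a (k + 1) ≤ a k) (t : ℕ) :
    ((∑ k ∈ range t, c k : ℝ) : EReal) + a t ≤ a 0 := by
  induction t with
  | zero => simp
  | succ t ih =>
    rw [sum_range_succ, EReal.coe_add, add_assoc]
    exact (add_le_add_right (hstep t) _).trans ih

end

theorem lmpc_recursive_feasibility_and_cost_bound_general
    {n d : ℕ}
    (A : (Fin n → ℝ) →ₗ[ℝ] (Fin n → ℝ)) (B : (Fin d → ℝ) →ₗ[ℝ] (Fin n → ℝ))
    (W X : Set (Fin n → ℝ)) (U : Set (Fin d → ℝ))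
    (h : (Fin n → ℝ) × (Fin d → ℝ) → ℝ)
    (hpos : ∀ x u, 0 ≤ h (x, u))
    (CS : Set (Fin n → ℝ)) (hCSX : CS ⊆ X)
    (Q : (Fin n → ℝ) → ℝ) (hQ0 : ∀ x ∈ CS, 0 ≤ Q x)
    (Qbar : (Fin n → ℝ) → EReal)
    (hQbarIn : ∀ x ∈ CS, Qbar x = (Q x : EReal))
    (hQbarOut : ∀ x ∉ CS, Qbar x = ⊤)
    (T : ((Fin n → ℝ) → EReal) → (Fin n → ℝ) → EReal)
    (hTin : ∀ f, ∀ x ∈ X, T f x =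
      ⨅ u ∈ U, ⨆ w ∈ W, ((h (x, u) : EReal) + f (A x + B u + w)))
    (hTout : ∀ f, ∀ x ∉ X, T f x = ⊤)
    (V : ℕ → (Fin n → ℝ) → EReal)
    (hV0 : V 0 = Qbar) (hVs : ∀ k, V (k + 1) = T (V k))
    (hRCL : ∀ x ∈ CS, ∃ u ∈ U, ∀ w ∈ W,
      A x + B u + w ∈ CS ∧ h (x, u) + Q (A x + B u + w) ≤ Q x)
    (N : ℕ)
    (x : ℕ → Fin n → ℝ) (u : ℕ → Fin d → ℝ) (w : ℕ → Fin n → ℝ)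
    (hfeas0 : V N (x 0) ≠ ⊤)
    (hw : ∀ k, w k ∈ W)
    (hdyn : ∀ k, x (k + 1) = A (x k) + B (u k) + w k)
    (hopt : ∀ k, (⨆ w' ∈ W,
      ((h (x k, u k) : EReal) + V (N - 1) (A (x k) + B (u k) + w'))) ≤ V N (x k)) :
    (∀ t, V N (x t) ≤ V N (x 0) ∧ V N (x t) ≠ ⊤) ∧
    ∀ T' : ℕ, ((∑ k ∈ Finset.range T', h (x k, u k) : ℝ) : EReal) ≤ V N (x 0) := by
  obtain rfl : T = robustBellman X U W h (fun x u w => A x + B u + w) :=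
    eq_robustBellman hTin hTout
  have hQbar_nonneg : 0 ≤ Qbar := fun y => by
    by_cases hy : y ∈ CS
    · simpa [hQbarIn y hy] using hQ0 y hy
    · simp [hQbarOut y hy]
  have hV_nonneg : ∀ k, 0 ≤ V k := le_of_succ_eq_map
    (fun _ => robustBellman_nonneg ⟨w 0, hw 0⟩ fun p => hpos p.1 p.2) hVs (hV0 ▸ hQbar_nonneg)
  have hV_anti : Antitone V := antitone_of_succ_eq_map robustBellman_mono hVs
    (hV0 ▸ robustBellman_le_of_controlLyapunov hCSX hQbarIn hQbarOut hRCL)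
  have hstep : ∀ k, (h (x k, u k) : EReal) + V N (x (k + 1)) ≤ V N (x k) := fun k =>
    calc (h (x k, u k) : EReal) + V N (x (k + 1))
        ≤ h (x k, u k) + V (N - 1) (A (x k) + B (u k) + w k) := by
          rw [← hdyn]; exact add_le_add_right (hV_anti (N.sub_le 1) _) _
      _ ≤ V N (x k) := le_iSup₂_of_le (w k) (hw k) le_rfl |>.trans (hopt k)
  have hcost_nonneg : ∀ t, (0 : EReal) ≤ ((∑ k ∈ range t, h (x k, u k) : ℝ) : EReal) := fun t =>
    EReal.coe_nonneg.mpr (sum_nonneg fun k _ => hpos _ _)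
  have htelescope := EReal.coe_sum_add_le_of_step (a := fun t => V N (x t)) hstep
  have hdecrease : ∀ t, V N (x t) ≤ V N (x 0) := fun t =>
    (le_add_of_nonneg_left (hcost_nonneg t)).trans (htelescope t)
  exact ⟨fun t => ⟨hdecrease t, ne_top_of_le_ne_top hfeas0 (hdecrease t)⟩, fun t =>
    (le_add_of_nonneg_right (hV_nonneg N _)).trans (htelescope t)⟩

/-- Recursive feasibility and performance bound (Theorem 1 combined with the
telescoping argument of Theorem 2): along any closed-loop trajectory in which
the applied input attains the infimum defining `V N`, the value `V N (x t)`
never exceeds `V N (x 0)` (hence stays finite) and the accumulated stage cost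
over any horizon `T'` is bounded by `V N (x 0)`. -/
theorem lmpc_recursive_feasibility_and_cost_bound
    {n d : ℕ}
    (A : (Fin n → ℝ) →ₗ[ℝ] (Fin n → ℝ)) (B : (Fin d → ℝ) →ₗ[ℝ] (Fin n → ℝ))
    (W X : Set (Fin n → ℝ)) (U : Set (Fin d → ℝ))
    (hW : W.Nonempty)
    (h : (Fin n → ℝ) × (Fin d → ℝ) → ℝ)
    (hpos : ∀ x u, 0 ≤ h (x, u))
    (CS : Set (Fin n → ℝ)) (hCSX : CS ⊆ X)
    (Q : (Fin n → ℝ) → ℝ) (hQ0 : ∀ x ∈ CS, 0 ≤ Q x)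
    (Qbar : (Fin n → ℝ) → EReal)
    (hQbarIn : ∀ x ∈ CS, Qbar x = (Q x : EReal))
    (hQbarOut : ∀ x ∉ CS, Qbar x = ⊤)
    (T : ((Fin n → ℝ) → EReal) → (Fin n → ℝ) → EReal)
    (hTin : ∀ f, ∀ x ∈ X, T f x =
      ⨅ u ∈ U, ⨆ w ∈ W, ((h (x, u) : EReal) + f (A x + B u + w)))
    (hTout : ∀ f, ∀ x ∉ X, T f x = ⊤)
    (V : ℕ → (Fin n → ℝ) → EReal)
    (hV0 : V 0 = Qbar) (hVs : ∀ k, V (k + 1) = T (V k))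
    (hRCL : ∀ x ∈ CS, ∃ u ∈ U, ∀ w ∈ W,
      A x + B u + w ∈ CS ∧ h (x, u) + Q (A x + B u + w) ≤ Q x)
    (N : ℕ) (hN : 1 ≤ N)
    (x : ℕ → Fin n → ℝ) (u : ℕ → Fin d → ℝ) (w : ℕ → Fin n → ℝ)
    (hfeas0 : V N (x 0) ≠ ⊤)
    (hw : ∀ k, w k ∈ W)
    (hdyn : ∀ k, x (k + 1) = A (x k) + B (u k) + w k)
    (hxX : ∀ k, x k ∈ X) (huU : ∀ k, u k ∈ U)
    (hopt : ∀ k, (⨆ w' ∈ W,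
      ((h (x k, u k) : EReal) + V (N - 1) (A (x k) + B (u k) + w'))) ≤ V N (x k)) :
    (∀ t, V N (x t) ≤ V N (x 0) ∧ V N (x t) ≠ ⊤) ∧
    ∀ T' : ℕ, ((∑ k ∈ Finset.range T', h (x k, u k) : ℝ) : EReal) ≤ V N (x 0) :=
  lmpc_recursive_feasibility_and_cost_bound_general A B W X U h hpos CS hCSX Q hQ0 Qbar hQbarIn
    hQbarOut T hTin hTout V hV0 hVs hRCL N x u w hfeas0 hw hdyn hopt
end

section
/- Assume the robust control Lyapunov hypothesis holds. Let S ⊆ CS and π : ℝ^n → ℝ^d and L : ℝ^n → ℝ satisfy: for all x ∈ S, π x ∈ U; for all x ∈ S and all w ∈ W, A x + B (π x) + w ∈ S and h(x, π x) + L(A x + B (π x) + w) ≤ L x; and Q x ≤ L x for all x ∈ S. Then for every horizon N and every x₀ ∈ S, the min–max LMPC value is bounded by the worst-case cost-to-go of the previous policy: V N x₀ ≤ (L x₀ : EReal). (Worst-case performance improvement: the worst-case iteration cost of the new LMPC policy does not exceed that of the policy generating L.) -/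
/-! Along the robustly invariant set `S`, the policy `π` is one admissible choice in the
min–max Bellman step, and `L` decreases by at least the stage cost along every disturbed
successor. Hence `L` is a supersolution of the Bellman recursion on `S`, and since it dominates
the terminal cost there, induction on the horizon bounds every value function by `L` on `S`. -/

theorem EReal.coe_add_le_of_le_coe {a b c : ℝ} {y : EReal} (hy : y ≤ b) (habc : a + b ≤ c) :
    (a : EReal) + y ≤ c :=
  calc (a : EReal) + y ≤ a + b := add_le_add le_rfl hy
    _ = ((a + b : ℝ) : EReal) := (EReal.coe_add a b).symm
    _ ≤ c := EReal.coe_le_coe_iff.mpr habc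

theorem iInf_iSup_stage_add_le_of_policy {σ ι κ : Type*} {U : Set ι} {W : Set κ}
    {step : σ → ι → κ → σ} {stage : σ → ι → ℝ} {f : σ → EReal} {L : σ → ℝ} {x : σ} {u : ι}
    (hu : u ∈ U) (hf : ∀ w ∈ W, f (step x u w) ≤ L (step x u w))
    (hdecr : ∀ w ∈ W, stage x u + L (step x u w) ≤ L x) :
    ⨅ v ∈ U, ⨆ w ∈ W, ((stage x v : EReal) + f (step x v w)) ≤ L x :=
  iInf₂_le_of_le u hu <| iSup₂_le fun w hw => EReal.coe_add_le_of_le_coe (hf w hw) (hdecr w hw)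

theorem lmpc_worst_case_performance_improvement_general
    {n d : ℕ}
    (A : (Fin n → ℝ) →ₗ[ℝ] (Fin n → ℝ)) (B : (Fin d → ℝ) →ₗ[ℝ] (Fin n → ℝ))
    (W X : Set (Fin n → ℝ)) (U : Set (Fin d → ℝ))
    (h : (Fin n → ℝ) × (Fin d → ℝ) → ℝ)
    (CS : Set (Fin n → ℝ)) (hCSX : CS ⊆ X)
    (Q : (Fin n → ℝ) → ℝ)
    (Qbar : (Fin n → ℝ) → EReal)
    (hQbarIn : ∀ x ∈ CS, Qbar x = (Q x : EReal))
    (T : ((Fin n → ℝ) → EReal) → (Fin n → ℝ) → EReal)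
    (hTin : ∀ f, ∀ x ∈ X, T f x =
      ⨅ u ∈ U, ⨆ w ∈ W, ((h (x, u) : EReal) + f (A x + B u + w)))
    (V : ℕ → (Fin n → ℝ) → EReal)
    (hV0 : V 0 = Qbar) (hVs : ∀ k, V (k + 1) = T (V k))
    (S : Set (Fin n → ℝ)) (hS : S ⊆ CS)
    (π : (Fin n → ℝ) → (Fin d → ℝ)) (L : (Fin n → ℝ) → ℝ)
    (hπU : ∀ x ∈ S, π x ∈ U)
    (hInv : ∀ x ∈ S, ∀ w ∈ W, A x + B (π x) + w ∈ S ∧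
      h (x, π x) + L (A x + B (π x) + w) ≤ L x)
    (hQL : ∀ x ∈ S, Q x ≤ L x) :
    ∀ (N : ℕ), ∀ x₀ ∈ S, V N x₀ ≤ (L x₀ : EReal) := by
  intro N
  induction N with
  | zero =>
    intro x hx
    rw [hV0, hQbarIn x (hS hx)]
    exact EReal.coe_le_coe_iff.mpr (hQL x hx)
  | succ k ih =>
    intro x hx
    rw [hVs k, hTin (V k) x (hCSX (hS hx))]
    exact iInf_iSup_stage_add_le_of_policy (step := fun x u w => A x + B u + w)
      (stage := fun x u => h (x, u)) (hπU x hx)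
      (fun w hw => ih _ (hInv x hx w hw).1) (fun w hw => (hInv x hx w hw).2)

/-- Value-function form of Theorem 2 (worst-case performance improvement):
if `L` is a worst-case cost-to-go certified by a policy `π` on a robustly
invariant subset `S ⊆ CS`, dominating the terminal cost `Q` on `S`, then the
min–max LMPC value satisfies `V N x₀ ≤ L x₀` for every `x₀ ∈ S`. -/
theorem lmpc_worst_case_performance_improvement
    {n d : ℕ}
    (A : (Fin n → ℝ) →ₗ[ℝ] (Fin n → ℝ)) (B : (Fin d → ℝ) →ₗ[ℝ] (Fin n → ℝ))
    (W X : Set (Fin n → ℝ)) (U : Set (Fin d → ℝ))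
    (hW : W.Nonempty)
    (h : (Fin n → ℝ) × (Fin d → ℝ) → ℝ)
    (hpos : ∀ x u, 0 ≤ h (x, u))
    (CS : Set (Fin n → ℝ)) (hCSX : CS ⊆ X)
    (Q : (Fin n → ℝ) → ℝ) (hQ0 : ∀ x ∈ CS, 0 ≤ Q x)
    (Qbar : (Fin n → ℝ) → EReal)
    (hQbarIn : ∀ x ∈ CS, Qbar x = (Q x : EReal))
    (hQbarOut : ∀ x ∉ CS, Qbar x = ⊤)
    (T : ((Fin n → ℝ) → EReal) → (Fin n → ℝ) → EReal)
    (hTin : ∀ f, ∀ x ∈ X, T f x =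
      ⨅ u ∈ U, ⨆ w ∈ W, ((h (x, u) : EReal) + f (A x + B u + w)))
    (hTout : ∀ f, ∀ x ∉ X, T f x = ⊤)
    (V : ℕ → (Fin n → ℝ) → EReal)
    (hV0 : V 0 = Qbar) (hVs : ∀ k, V (k + 1) = T (V k))
    (hRCL : ∀ x ∈ CS, ∃ u ∈ U, ∀ w ∈ W,
      A x + B u + w ∈ CS ∧ h (x, u) + Q (A x + B u + w) ≤ Q x)
    (S : Set (Fin n → ℝ)) (hS : S ⊆ CS)
    (π : (Fin n → ℝ) → (Fin d → ℝ)) (L : (Fin n → ℝ) → ℝ)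
    (hπU : ∀ x ∈ S, π x ∈ U)
    (hInv : ∀ x ∈ S, ∀ w ∈ W, A x + B (π x) + w ∈ S ∧
      h (x, π x) + L (A x + B (π x) + w) ≤ L x)
    (hQL : ∀ x ∈ S, Q x ≤ L x) :
    ∀ (N : ℕ), ∀ x₀ ∈ S, V N x₀ ≤ (L x₀ : EReal) :=
  lmpc_worst_case_performance_improvement_general A B W X U h CS hCSX Q Qbar hQbarIn T hTin V hV0
    hVs S hS π L hπU hInv hQL
end
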